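/- arXiv:1606.01766 — 2 statements merged into one kernel-verified Lean document; each statement's English description precedes it below -/
import Mathlib

section
/- Let P(λ) = ∑_{k=0}^d λ^k P_k be a regular n×n matrix polynomial over a field F of odd degree d = 2s+1, let σ ∈ {1,−1}, and let L(λ) be the block Kronecker pencil built from a pencil λB+A of size (s+1)n×(s+1)n satisfying (Λ_s(λ)^T⊗I_n)(λB+A)(Λ_s(λ)⊗I_n) = P(λ). If z ∈ F^{dn} satisfies z ≠ 0 and (rev_1 L)(0)·z = 0 (i.e., z lies in the kernel of the leading coefficient matrix of the pencil L(λ)), then the first n×n block x of z (the first n entries) satisfies x ≠ 0 and P_d x = 0; that is, x is a right eigenvector of P for the eigenvalue ∞. -/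
open Polynomial Matrix
open scoped Kronecker

noncomputable section

/-- Entrywise inclusion of a constant matrix into polynomial matrices. -/
def matC {F : Type} [Field F] {m l : Type*} (M : Matrix m l F) : Matrix m l (Polynomial F) :=
  M.map fun a => (C a : Polynomial F)

/-- The pencil `λ ↦ A + λ B`, represented as a matrix over `F[λ]`. -/
def pencil {F : Type} [Field F] {m l : Type*} (A B : Matrix m l F) :
    Matrix m l (Polynomial F) :=
  matC A + (X : Polynomial F) • matC B

/-- Grade-`g` reversal `rev_g`, applied entrywise. -/
def revMat {F : Type} [Field F] {m l : Type*} (g : ℕ) (M : Matrix m l (Polynomial F)) :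
    Matrix m l (Polynomial F) :=
  M.map fun q => q.reflect g

/-- Entrywise evaluation of a polynomial matrix at a point. -/
def evalMat {F : Type} [Field F] {m l : Type*} (a : F) (M : Matrix m l (Polynomial F)) :
    Matrix m l F :=
  M.map fun q => q.eval a

/-- The matrix polynomial `P(λ) = ∑_{k=0}^d λ^k P_k` built from its coefficients. -/
def polyOfCoeffs {F : Type} [Field F] {n : ℕ} (d : ℕ) (Pc : ℕ → Matrix (Fin n) (Fin n) F) :
    Matrix (Fin n) (Fin n) (Polynomial F) :=
  ∑ k ∈ Finset.range (d + 1), (X : Polynomial F) ^ k • matC (Pc k)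

/-- The `(i,j)` block of a block-partitioned matrix. -/
def blk {α p q n m : Type*} (A : Matrix (p × n) (q × m) α) (i : p) (j : q) :
    Matrix n m α :=
  Matrix.of fun r c => A (i, r) (j, c)

/-- `Λ_s(λ) ⊗ I_n`, an `(s+1)n × n` polynomial matrix whose `i`-th block is `λ^{s-i} I_n`. -/
def Lam (F : Type) [Field F] (s n : ℕ) :
    Matrix (Fin (s+1) × Fin n) (Fin n) (Polynomial F) :=
  Matrix.of fun p c => if p.2 = c then (X : Polynomial F) ^ (s - (p.1 : ℕ)) else 0

/-- The pencil `L_s(λ) ∈ F[λ]^{s×(s+1)}` with `-1` on the diagonal and `λ` on the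
superdiagonal. -/
def Lpen (F : Type) [Field F] (s : ℕ) : Matrix (Fin s) (Fin (s+1)) (Polynomial F) :=
  Matrix.of fun i j =>
    if (j : ℕ) = (i : ℕ) then -1 else if (j : ℕ) = (i : ℕ) + 1 then X else 0

/-- The block Kronecker pencil `[[λB+A, L_s(λ)ᵀ⊗I_n],[σ L_s(λ)⊗I_n, 0]]` associated with a
pencil `M = λB+A` of size `(s+1)n × (s+1)n`. -/
def blockKron (F : Type) [Field F] (s n : ℕ) (σ : F)
    (M : Matrix (Fin (s+1) × Fin n) (Fin (s+1) × Fin n) (Polynomial F)) :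
    Matrix ((Fin (s+1) × Fin n) ⊕ (Fin s × Fin n)) ((Fin (s+1) × Fin n) ⊕ (Fin s × Fin n))
      (Polynomial F) :=
  Matrix.fromBlocks M (Lpen F s ⊗ₖ (1 : Matrix (Fin n) (Fin n) (Polynomial F)))ᵀ
    (σ • (Lpen F s ⊗ₖ (1 : Matrix (Fin n) (Fin n) (Polynomial F)))) 0

/-- `L` is a linearization of `P`: there are unimodular `U`, `V` with
`U L V = diag(I_m, P)` (up to the fixed identification of index sets). -/
def IsLinearization {F : Type} [Field F] (m : ℕ) {ι ρ : Type*} [Fintype ι] [DecidableEq ι]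
    [Fintype ρ] [DecidableEq ρ] (L : Matrix ι ι (Polynomial F))
    (P : Matrix ρ ρ (Polynomial F)) : Prop :=
  ∃ (e : (Fin m ⊕ ρ) ≃ ι) (U V : Matrix ι ι (Polynomial F)),
    IsUnit U.det ∧ IsUnit V.det ∧
      U * L * V =
        (Matrix.fromBlocks (1 : Matrix (Fin m) (Fin m) (Polynomial F)) 0 0 P).submatrix
          e.symm e.symm

/-- The block conditions `∑_{i+j=d+2-k} B_{ij} + ∑_{i+j=d+1-k} A_{ij} = P_k` for
`k = 0,…,d` (blocks are indexed here `0`-based, so `i+j` `1`-based is `i+j+2` `0`-based). -/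
def blockConds {F : Type} [Field F] {s n : ℕ} (d : ℕ) (Pc : ℕ → Matrix (Fin n) (Fin n) F)
    (A B : Matrix (Fin (s+1) × Fin n) (Fin (s+1) × Fin n) F) : Prop :=
  ∀ k, k ≤ d →
    (∑ p ∈ Finset.univ.filter
        (fun p : Fin (s+1) × Fin (s+1) => (p.1 : ℕ) + (p.2 : ℕ) + 2 + k = d + 2),
        blk B p.1 p.2) +
      (∑ p ∈ Finset.univ.filter
        (fun p : Fin (s+1) × Fin (s+1) => (p.1 : ℕ) + (p.2 : ℕ) + 2 + k = d + 1),
        blk A p.1 p.2) = Pc k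

/-- `L̂_t(λ) ⊗ I_n` (with `t = u+1`): first block column zero, remaining block columns
`L_{t-1}(λ) ⊗ I_n`; the column index is split as `Fin n ⊕ (Fin t × Fin n)`. -/
def LhatB (F : Type) [Field F] (u n : ℕ) :
    Matrix (Fin u × Fin n) (Fin n ⊕ Fin (u+1) × Fin n) (Polynomial F) :=
  Matrix.of fun p q =>
    match q with
    | Sum.inl _ => 0
    | Sum.inr c => (Lpen F u ⊗ₖ (1 : Matrix (Fin n) (Fin n) (Polynomial F))) p c

/-- The modified block Kronecker pencil `[[λB+A, L̂_t(λ)ᵀ⊗I_n],[σ L̂_t(λ)⊗I_n, 0]]`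
(with `t = u+1`). -/
def modBK (F : Type) [Field F] (u n : ℕ) (σ : F)
    (M : Matrix (Fin n ⊕ Fin (u+1) × Fin n) (Fin n ⊕ Fin (u+1) × Fin n) (Polynomial F)) :
    Matrix ((Fin n ⊕ Fin (u+1) × Fin n) ⊕ Fin u × Fin n)
      ((Fin n ⊕ Fin (u+1) × Fin n) ⊕ Fin u × Fin n) (Polynomial F) :=
  Matrix.fromBlocks M (LhatB F u n)ᵀ (σ • LhatB F u n) 0

/-- `Λ̂_t(λ) ⊗ I_n` (with `t = u+1`): the `(t+1)n × 2n` polynomial matrix whose transpose has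
block rows `(I_n, 0, …, 0)` and `(0, λ^{t-1}I_n, …, λ I_n, I_n)`. -/
def LamHatB (F : Type) [Field F] (u n : ℕ) :
    Matrix (Fin n ⊕ Fin (u+1) × Fin n) (Fin 2 × Fin n) (Polynomial F) :=
  Matrix.of fun q c =>
    match q with
    | Sum.inl r => if c.1 = 0 ∧ c.2 = r then 1 else 0
    | Sum.inr p => if c.1 = 1 ∧ c.2 = p.2 then (X : Polynomial F) ^ (u - (p.1 : ℕ)) else 0

/-- `Λ̃_t(λ) ⊗ I_n` (with `t = u+1`): the `(t+1)n × 2n` polynomial matrix whose transpose has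
block rows `(I_n, 0, …, 0)` and `(0, I_n, λ I_n, …, λ^{t-1} I_n)`. -/
def LamTildeB (F : Type) [Field F] (u n : ℕ) :
    Matrix (Fin n ⊕ Fin (u+1) × Fin n) (Fin 2 × Fin n) (Polynomial F) :=
  Matrix.of fun q c =>
    match q with
    | Sum.inl r => if c.1 = 0 ∧ c.2 = r then 1 else 0
    | Sum.inr p => if c.1 = 1 ∧ c.2 = p.2 then (X : Polynomial F) ^ (p.1 : ℕ) else 0

/-- A `2n × 2n` matrix assembled from four `n × n` blocks, indexed by `Fin 2 × Fin n`. -/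
def twoBlock {α : Type*} {n : ℕ} (W₁₁ W₁₂ W₂₁ W₂₂ : Matrix (Fin n) (Fin n) α) :
    Matrix (Fin 2 × Fin n) (Fin 2 × Fin n) α :=
  Matrix.of fun p q =>
    if p.1 = 0 then (if q.1 = 0 then W₁₁ p.2 q.2 else W₁₂ p.2 q.2)
    else (if q.1 = 0 then W₂₁ p.2 q.2 else W₂₂ p.2 q.2)

/-- `Λ_t(λ) ⊗ I_n` (with `t = u+1`), over the split row index `Fin n ⊕ (Fin t × Fin n)`:
block entries `λ^t I_n, λ^{t-1} I_n, …, λ I_n, I_n`. -/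
def LamFullB (F : Type) [Field F] (u n : ℕ) :
    Matrix (Fin n ⊕ Fin (u+1) × Fin n) (Fin n) (Polynomial F) :=
  Matrix.of fun q c =>
    match q with
    | Sum.inl r => if r = c then (X : Polynomial F) ^ (u + 1) else 0
    | Sum.inr p => if p.2 = c then (X : Polynomial F) ^ (u - (p.1 : ℕ)) else 0

/-- `N̂_t(λ) = Ĥ_t(λ) ⊗ I_n` (with `t = u+1`): `Ĥ_t ∈ F[λ]^{(t-1)×(t+1)}` has `(i,j)` entry
`λ^{i+1-j}` if `2 ≤ j ≤ i+1` and `0` otherwise. -/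
def NhatB (F : Type) [Field F] (u n : ℕ) :
    Matrix (Fin u × Fin n) (Fin n ⊕ Fin (u+1) × Fin n) (Polynomial F) :=
  Matrix.of fun p q =>
    match q with
    | Sum.inl _ => 0
    | Sum.inr c =>
        if (c.1 : ℕ) ≤ (p.1 : ℕ) ∧ p.2 = c.2 then
          (X : Polynomial F) ^ ((p.1 : ℕ) - (c.1 : ℕ)) else 0

end
section myaux
variable {F : Type} [Field F]

lemma myCoeff1Pencil {m l : Type*} (A B : Matrix m l F) (p : m) (q : l) :
    (pencil A B p q).coeff 1 = B p q := by
  simp [pencil, matC, Matrix.add_apply, Matrix.smul_apply, smul_eq_mul,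
    Polynomial.coeff_add, Polynomial.coeff_C, Polynomial.coeff_X_mul, Matrix.map_apply]

lemma myEvalRevEntry {m l : Type*} (M : Matrix m l (Polynomial F)) (p : m) (q : l) :
    evalMat (0 : F) (revMat 1 M) p q = (M p q).coeff 1 := by
  show ((M p q).reflect 1).eval 0 = (M p q).coeff 1
  rw [← Polynomial.coeff_zero_eq_eval_zero, Polynomial.coeff_reflect,
    Polynomial.revAt_le (by norm_num)]

lemma myCoeff1LK {s n : ℕ} (p : Fin s × Fin n) (q : Fin (s+1) × Fin n) :
    ((Lpen F s ⊗ₖ (1 : Matrix (Fin n) (Fin n) (Polynomial F))) p q).coeff 1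
      = if (q.1 : ℕ) = (p.1 : ℕ) + 1 ∧ p.2 = q.2 then 1 else 0 := by
  simp only [Matrix.kroneckerMap_apply, Lpen, Matrix.one_apply, Matrix.of_apply]
  split_ifs with h1 h2 h3 h4 h5 h6 h7 <;>
    simp_all [Polynomial.coeff_X_one, Polynomial.coeff_neg, Polynomial.coeff_one] 

end myaux

/-- (Eigenvector recovery at `∞`, odd degree `d = 2s+1`.)
If `z ≠ 0` and `(rev_1 L)(0)z = 0` for a block Kronecker pencil `L` of a regular `P`, then
the first `n × n` block of `z` is a right eigenvector of `P` for the eigenvalue `∞`,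
i.e. `P_d x = 0`, `x ≠ 0`. -/
theorem stmt_15 {F : Type} [Field F] (n s : ℕ)
    (Pc : ℕ → Matrix (Fin n) (Fin n) F)
    (hdeg : Pc (2*s+1) ≠ 0)
    (hreg : (polyOfCoeffs (2*s+1) Pc).det ≠ 0)
    (σ : F) (hσ : σ = 1 ∨ σ = -1)
    (A B : Matrix (Fin (s+1) × Fin n) (Fin (s+1) × Fin n) F)
    (hM : (Lam F s n)ᵀ * pencil A B * Lam F s n = polyOfCoeffs (2*s+1) Pc)
    (z : ((Fin (s+1) × Fin n) ⊕ (Fin s × Fin n)) → F)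
    (hz : z ≠ 0)
    (hLz : (evalMat (0 : F) (revMat 1 (blockKron F s n σ (pencil A B)))).mulVec z = 0) :
    (fun r => z (Sum.inl ((0 : Fin (s+1)), r))) ≠ 0 ∧
      (Pc (2*s+1)).mulVec (fun r => z (Sum.inl ((0 : Fin (s+1)), r))) = 0 := by
    classical
  set x : Fin n → F := fun r => z (Sum.inl ((0 : Fin (s+1)), r)) with hxdef
  set M : Matrix ((Fin (s+1) × Fin n) ⊕ (Fin s × Fin n))
      ((Fin (s+1) × Fin n) ⊕ (Fin s × Fin n)) F :=
    evalMat (0 : F) (revMat 1 (blockKron F s n σ (pencil A B))) with hMdef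
  have hσ0 : σ ≠ 0 := by rcases hσ with h | h <;> simp [h]
  -- entries of M
  have M11 : ∀ (p a : Fin (s+1) × Fin n), M (Sum.inl p) (Sum.inl a) = B p a := by
    intro p a
    rw [hMdef, myEvalRevEntry]
    simp only [blockKron, Matrix.fromBlocks_apply₁₁]
    exact myCoeff1Pencil A B p a
  have M12 : ∀ (p : Fin (s+1) × Fin n) (b : Fin s × Fin n),
      M (Sum.inl p) (Sum.inr b) = if (p.1 : ℕ) = (b.1 : ℕ) + 1 ∧ b.2 = p.2 then 1 else 0 := by
    intro p b
    rw [hMdef, myEvalRevEntry]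
    simp only [blockKron, Matrix.fromBlocks_apply₁₂, Matrix.transpose_apply]
    rw [myCoeff1LK]
  have M21 : ∀ (p : Fin s × Fin n) (a : Fin (s+1) × Fin n),
      M (Sum.inr p) (Sum.inl a) = if (a.1 : ℕ) = (p.1 : ℕ) + 1 ∧ p.2 = a.2 then σ else 0 := by
    intro p a
    rw [hMdef, myEvalRevEntry]
    simp only [blockKron, Matrix.fromBlocks_apply₂₁, Matrix.smul_apply, Polynomial.coeff_smul]
    rw [myCoeff1LK]
    split_ifs <;> simp
  have M22 : ∀ (p b : Fin s × Fin n), M (Sum.inr p) (Sum.inr b) = 0 := by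
    intro p b
    rw [hMdef, myEvalRevEntry]
    simp [blockKron]
  -- row equations
  have row2 : ∀ p : Fin s × Fin n,
      (∑ a : Fin (s+1) × Fin n,
        (if (a.1 : ℕ) = (p.1 : ℕ) + 1 ∧ p.2 = a.2 then σ else 0) * z (Sum.inl a)) = 0 := by
    intro p
    have h := congrFun hLz (Sum.inr p)
    simpa [Matrix.mulVec, dotProduct, Fintype.sum_sum_type, M21, M22] using h
  have row1 : ∀ p : Fin (s+1) × Fin n,
      (∑ a : Fin (s+1) × Fin n, B p a * z (Sum.inl a)) +
        (∑ b : Fin s × Fin n,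
          (if (p.1 : ℕ) = (b.1 : ℕ) + 1 ∧ b.2 = p.2 then 1 else 0) * z (Sum.inr b)) = 0 := by
    intro p
    have h := congrFun hLz (Sum.inl p)
    simpa [Matrix.mulVec, dotProduct, Fintype.sum_sum_type, M11, M12] using h
  -- z vanishes on nonzero inl blocks
  have hz1 : ∀ (j : Fin (s+1)), (j : ℕ) ≠ 0 → ∀ c : Fin n, z (Sum.inl (j, c)) = 0 := by
    intro j hj c
    have hjs : (j : ℕ) - 1 < s := by omega
    set i : Fin s := ⟨(j : ℕ) - 1, hjs⟩ with hidef
    have h := row2 (i, c)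
    rw [Fintype.sum_eq_single (j, c)] at h
    · rw [if_pos] at h
      · exact (mul_eq_zero.mp h).resolve_left hσ0
      · constructor
        · simp [hidef]; omega
        · rfl
    · intro a ha
      rw [if_neg, zero_mul]
      rintro ⟨h1, h2⟩
      apply ha
      have : (a.1 : ℕ) = (j : ℕ) := by simp [hidef] at h1; omega
      exact Prod.ext (Fin.ext this) h2.symm
  -- key equation: (blk B 0 0) * x = 0
  have key : ∀ r : Fin n,
      (∑ c : Fin n, B ((0 : Fin (s+1)), r) ((0 : Fin (s+1)), c) * x c) = 0 := by
    intro r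
    have h := row1 ((0 : Fin (s+1)), r)
    have h2 : (∑ b : Fin s × Fin n,
        (if ((((0 : Fin (s+1)), r) : Fin (s+1) × Fin n).1 : ℕ) = (b.1 : ℕ) + 1 ∧
          b.2 = ((0 : Fin (s+1)), r).2 then (1:F) else 0) * z (Sum.inr b)) = 0 := by
      apply Finset.sum_eq_zero
      intro b _
      rw [if_neg, zero_mul]
      rintro ⟨h1, -⟩
      simp at h1
    rw [h2, add_zero] at h
    rw [Fintype.sum_prod_type] at h
    rw [Finset.sum_eq_single (0 : Fin (s+1))] at h
    · exact h
    · intro j _ hj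
      apply Finset.sum_eq_zero
      intro c _
      rw [hz1 j (fun hv => hj (Fin.ext hv)) c, mul_zero]
    · intro habs
      exact absurd (Finset.mem_univ _) habs
  -- B block 0 0 equals Pc (2s+1)
  have hB00 : ∀ r c : Fin n,
      B ((0 : Fin (s+1)), r) ((0 : Fin (s+1)), c) = Pc (2*s+1) r c := by
    intro r c
    have h := congrArg (fun W : Matrix (Fin n) (Fin n) (Polynomial F) =>
      (W r c).coeff (2*s+1)) hM
    have hR : ((polyOfCoeffs (2*s+1) Pc) r c).coeff (2*s+1) = Pc (2*s+1) r c := by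
      simp only [polyOfCoeffs, Matrix.sum_apply, Matrix.smul_apply, matC, Matrix.map_apply,
        Polynomial.finset_sum_coeff, smul_eq_mul]
      rw [Finset.sum_eq_single (2*s+1)]
      · rw [mul_comm, Polynomial.coeff_C_mul, Polynomial.coeff_X_pow, if_pos rfl, mul_one]
      · intro k _ hk
        rw [mul_comm, Polynomial.coeff_C_mul, Polynomial.coeff_X_pow, if_neg (fun h => hk h.symm),
          mul_zero]
      · intro habs
        exact absurd (Finset.self_mem_range_succ (2*s+1)) habs
    have hL : (((Lam F s n)ᵀ * pencil A B * Lam F s n) r c).coeff (2*s+1)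
        = B ((0 : Fin (s+1)), r) ((0 : Fin (s+1)), c) := by
      have expand : ((Lam F s n)ᵀ * pencil A B * Lam F s n) r c
          = ∑ q : Fin (s+1) × Fin n, ∑ p : Fin (s+1) × Fin n,
              Lam F s n p r * pencil A B p q * Lam F s n q c := by
        rw [Matrix.mul_apply]
        apply Finset.sum_congr rfl
        intro q _
        rw [Matrix.mul_apply, Finset.sum_mul]
        apply Finset.sum_congr rfl
        intro p _
        rw [Matrix.transpose_apply]
      rw [expand, Polynomial.finset_sum_coeff]
      have hterm : ∀ p q : Fin (s+1) × Fin n,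
          (Lam F s n p r * pencil A B p q * Lam F s n q c).coeff (2*s+1)
            = if p = ((0 : Fin (s+1)), r) ∧ q = ((0 : Fin (s+1)), c) then B p q else 0 := by
        intro p q
        simp only [Lam, Matrix.of_apply, pencil, matC, Matrix.add_apply, Matrix.smul_apply,
          Matrix.map_apply, smul_eq_mul]
        by_cases h1 : p.2 = r
        · by_cases h2 : q.2 = c
          · rw [if_pos h1, if_pos h2]
            have hring : (X : Polynomial F) ^ (s - (p.1:ℕ)) *
                (Polynomial.C (A p q) + X * Polynomial.C (B p q)) * X ^ (s - (q.1:ℕ))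
                = Polynomial.C (A p q) * X ^ ((s - (p.1:ℕ)) + (s - (q.1:ℕ)))
                  + Polynomial.C (B p q) * X ^ ((s - (p.1:ℕ)) + (s - (q.1:ℕ)) + 1) := by
              ring
            rw [hring, Polynomial.coeff_add, Polynomial.coeff_C_mul, Polynomial.coeff_C_mul,
              Polynomial.coeff_X_pow, Polynomial.coeff_X_pow]
            have hp : (p.1 : ℕ) ≤ s := by omega
            have hq : (q.1 : ℕ) ≤ s := by omega
            rw [if_neg (by omega)]
            by_cases h3 : (p.1 : ℕ) = 0 ∧ (q.1 : ℕ) = 0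
            · rw [if_pos (by omega), if_pos ⟨Prod.ext (Fin.ext h3.1) h1, Prod.ext (Fin.ext h3.2) h2⟩]
              ring
            · rw [if_neg (by omega), if_neg]
              · ring
              · rintro ⟨hpp, hqq⟩
                exact h3 ⟨by simp [hpp], by simp [hqq]⟩
          · rw [if_neg h2, mul_zero, Polynomial.coeff_zero, if_neg]
            rintro ⟨-, hq⟩
            exact h2 (by rw [hq])
        · rw [if_neg h1, zero_mul, zero_mul, Polynomial.coeff_zero, if_neg]
          rintro ⟨hp, -⟩
          exact h1 (by rw [hp])
      calc (∑ q : Fin (s+1) × Fin n, (∑ p : Fin (s+1) × Fin n,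
              Lam F s n p r * pencil A B p q * Lam F s n q c).coeff (2*s+1))
          = ∑ q : Fin (s+1) × Fin n, ∑ p : Fin (s+1) × Fin n,
              (if p = ((0 : Fin (s+1)), r) ∧ q = ((0 : Fin (s+1)), c) then B p q else 0) := by
            apply Finset.sum_congr rfl
            intro q _
            rw [Polynomial.finset_sum_coeff]
            exact Finset.sum_congr rfl fun p _ => hterm p q
        _ = B ((0 : Fin (s+1)), r) ((0 : Fin (s+1)), c) := by
            rw [Fintype.sum_eq_single ((0 : Fin (s+1)), c)]
            · rw [Fintype.sum_eq_single ((0 : Fin (s+1)), r)]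
              · rw [if_pos ⟨rfl, rfl⟩]
              · intro p hp
                rw [if_neg (fun h => hp h.1)]
            · intro q hq
              apply Finset.sum_eq_zero
              intro p _
              rw [if_neg (fun h => hq h.2)]
    rw [hL, hR] at h
    exact h
  constructor
  · -- x ≠ 0
    intro hx0
    apply hz
    have hzinl : ∀ a : Fin (s+1) × Fin n, z (Sum.inl a) = 0 := by
      rintro ⟨j, c⟩
      by_cases hj : (j : ℕ) = 0
      · have : j = (0 : Fin (s+1)) := Fin.ext hj
        rw [this]
        exact congrFun hx0 c
      · exact hz1 j hj c
    funext idx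
    rcases idx with a | ⟨j, c⟩
    · exact hzinl a
    · have h := row1 (j.succ, c)
      have h1 : (∑ a : Fin (s+1) × Fin n, B (j.succ, c) a * z (Sum.inl a)) = 0 :=
        Finset.sum_eq_zero fun a _ => by rw [hzinl a, mul_zero]
      rw [h1, zero_add] at h
      rw [Fintype.sum_eq_single (j, c)] at h
      · rw [if_pos ⟨by simp, rfl⟩, one_mul] at h
        exact h
      · intro b hb
        rw [if_neg, zero_mul]
        rintro ⟨h1, h2⟩
        apply hb
        have : (b.1 : ℕ) = (j : ℕ) := by simp at h1; omega
        exact Prod.ext (Fin.ext this) h2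
  · -- mulVec = 0
    funext r
    show (∑ c : Fin n, Pc (2*s+1) r c * x c) = 0
    calc (∑ c : Fin n, Pc (2*s+1) r c * x c)
        = ∑ c : Fin n, B ((0 : Fin (s+1)), r) ((0 : Fin (s+1)), c) * x c := by
          exact Finset.sum_congr rfl fun c _ => by rw [hB00 r c]
      _ = 0 := key r
end

section
/- Let P(λ) = ∑_{k=0}^d λ^k P_k be a regular n×n matrix polynomial over a field F with even degree d = 2t (t ≥ 2) and invertible leading coefficient P_d, set Q(λ) := ∑_{k=0}^{d−1} λ^k P_k, and let λB+A be a pencil of size (t+1)n×(t+1)n with blocks M_{11}(λ) = −P_d, M_{12}(λ), M_{21}(λ), M_{22}(λ) satisfying M_{12}(λ)(Λ_{t−1}(λ)⊗I_n) = λ^t P_d, (Λ_{t−1}(λ)^T⊗I_n)M_{21}(λ) = λ^t P_d, and (Λ_{t−1}(λ)^T⊗I_n)M_{22}(λ)(Λ_{t−1}(λ)⊗I_n) = Q(λ). Let L(λ) be the associated modified block Kronecker pencil with parameter σ ∈ {1,−1}. If λ0 ∈ F and z ∈ F^{2tn} satisfy z ≠ 0 and L(λ0)z = 0, then the (t+1)-th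 n×n block x of z (the entries in positions tn+1, …, (t+1)n) satisfies x ≠ 0 and P(λ0)x = 0. -/
open Polynomial Matrix
open scoped Kronecker

section Aux
variable {F : Type} [Field F]

lemma lpen_apply {u : ℕ} (i : Fin u) (j : Fin (u+1)) :
    Lpen F u i j = (if j = i.castSucc then (-1 : Polynomial F) else 0)
      + (if j = i.succ then X else 0) := by
  simp only [Lpen, Matrix.of_apply, Fin.ext_iff, Fin.coe_castSucc, Fin.val_succ]
  by_cases h1 : (j:ℕ) = (i:ℕ) <;> by_cases h2 : (j:ℕ) = (i:ℕ)+1 <;>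
    simp [h1, h2] <;> try omega

lemma colsum {u : ℕ} (i : Fin u) (g : Fin (u+1) → Polynomial F) :
    ∑ j, Lpen F u i j * g j = -g i.castSucc + X * g i.succ := by
  simp only [lpen_apply, add_mul, ite_mul, zero_mul, neg_one_mul]
  rw [Finset.sum_add_distrib]
  simp [Finset.sum_ite_eq']

lemma colsum_eval {u : ℕ} (lam0 : F) (i : Fin u) (g : Fin (u+1) → F) :
    ∑ j, (Lpen F u i j).eval lam0 * g j = -g i.castSucc + lam0 * g i.succ := by
  have h := congrArg (Polynomial.eval lam0) (colsum i (fun j => C (g j)))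
  simp only [Polynomial.eval_finset_sum, eval_mul, eval_C, eval_add, eval_neg, eval_X] at h
  rw [h]
  try ring

lemma kron_mul_lam (u n : ℕ) :
    (Lpen F u ⊗ₖ (1 : Matrix (Fin n) (Fin n) (Polynomial F))) * Lam F u n = 0 := by
  ext ⟨i, r⟩ c
  simp only [Matrix.mul_apply, Matrix.zero_apply, Lam, Matrix.of_apply,
    Matrix.kroneckerMap_apply, Fintype.sum_prod_type, Matrix.one_apply,
    mul_ite, ite_mul, mul_zero, zero_mul, mul_one, Finset.sum_ite_eq', Finset.mem_univ,
    if_true]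
  by_cases hrc : r = c
  · simp only [hrc, if_true]
    rw [colsum i (fun j => (X:Polynomial F) ^ (u - (j:ℕ)))]
    have : u - (i.castSucc:ℕ) = (u - (i.succ:ℕ)) + 1 := by
      simp [Fin.coe_castSucc, Fin.val_succ]; omega
    rw [this, pow_succ']
    ring
  · simp [hrc]

lemma evalMat_mul {m l o : Type*} [Fintype l] (a : F) (M : Matrix m l (Polynomial F))
    (N : Matrix l o (Polynomial F)) :
    evalMat a (M * N) = evalMat a M * evalMat a N := by
  simp only [evalMat, ← Polynomial.coe_evalRingHom, Matrix.map_mul]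

end Aux


section Aux2
variable {F : Type} [Field F]

lemma evalMat_add {m l : Type*} (a : F) (M N : Matrix m l (Polynomial F)) :
    evalMat a (M + N) = evalMat a M + evalMat a N := by
  ext i j; simp [evalMat]

lemma evalMat_transpose {m l : Type*} (a : F) (M : Matrix m l (Polynomial F)) :
    evalMat a (Mᵀ) = (evalMat a M)ᵀ := by
  ext i j; simp [evalMat]

lemma evalMat_XsmulC {m l : Type*} [Field F] (a : F) (k : ℕ) (P : Matrix m l F) :
    evalMat a ((X : Polynomial F) ^ k • matC P) = a ^ k • P := by
  ext i j
  simp [evalMat, matC, smul_eq_mul]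
  ring

lemma evalMat_neg {m l : Type*} (a : F) (M : Matrix m l (Polynomial F)) :
    evalMat a (-M) = -(evalMat a M) := by
  ext i j; simp [evalMat]

lemma evalMat_zero {m l : Type*} (a : F) :
    evalMat a (0 : Matrix m l (Polynomial F)) = 0 := by
  ext i j; simp [evalMat]

end Aux2

/-- (Eigenvector recovery, `t = u+1 ≥ 2`, `d = 2t`, `P_d` invertible,
`P` regular.) If `z ≠ 0` and `L(λ0)z = 0` for the modified block Kronecker pencil `L`,
then the `(t+1)`-th `n × n` block of `z` is a right eigenvector of `P` with
eigenvalue `λ0`. -/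
theorem stmt_18 {F : Type} [Field F] (n u : ℕ) (hn : 0 < n) (hu : 1 ≤ u)
    (Pc : ℕ → Matrix (Fin n) (Fin n) F)
    (hPd : IsUnit (Pc (2*(u+1))).det)
    (hreg : (polyOfCoeffs (2*(u+1)) Pc).det ≠ 0)
    (σ : F) (hσ : σ = 1 ∨ σ = -1)
    (A B : Matrix (Fin n ⊕ Fin (u+1) × Fin n) (Fin n ⊕ Fin (u+1) × Fin n) F)
    (h11 : (pencil A B).toBlocks₁₁ = -(matC (Pc (2*(u+1)))))
    (h12 : (pencil A B).toBlocks₁₂ * Lam F u n =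
      (X : Polynomial F) ^ (u+1) • matC (Pc (2*(u+1))))
    (h21 : (Lam F u n)ᵀ * (pencil A B).toBlocks₂₁ =
      (X : Polynomial F) ^ (u+1) • matC (Pc (2*(u+1))))
    (h22 : (Lam F u n)ᵀ * (pencil A B).toBlocks₂₂ * Lam F u n =
      ∑ k ∈ Finset.range (2*(u+1)), (X : Polynomial F) ^ k • matC (Pc k))
    (lam0 : F) (z : ((Fin n ⊕ Fin (u+1) × Fin n) ⊕ Fin u × Fin n) → F)
    (hz : z ≠ 0)
    (hLz : (evalMat lam0 (modBK F u n σ (pencil A B))).mulVec z = 0) :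
    (fun r => z (Sum.inl (Sum.inr (Fin.last u, r)))) ≠ 0 ∧
      (evalMat lam0 (polyOfCoeffs (2*(u+1)) Pc)).mulVec
        (fun r => z (Sum.inl (Sum.inr (Fin.last u, r)))) = 0 := by
  classical
  set Pd : Matrix (Fin n) (Fin n) F := Pc (2*(u+1)) with hPddef
  set x : Fin n → F := fun r => z (Sum.inl (Sum.inr (Fin.last u, r))) with hxdef
  set w : (Fin n ⊕ Fin (u+1) × Fin n) → F := fun q => z (Sum.inl q) with hwdef
  set yv : Fin u × Fin n → F := fun p => z (Sum.inr p) with hyvdef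
  have hs0 : σ ≠ 0 := by rcases hσ with h | h <;> simp [h]
  -- decompose the big pencil equation
  have hfb : evalMat lam0 (modBK F u n σ (pencil A B))
      = Matrix.fromBlocks (evalMat lam0 (pencil A B)) (evalMat lam0 ((LhatB F u n)ᵀ))
          (σ • evalMat lam0 (LhatB F u n)) 0 := by
    unfold modBK
    show (Matrix.fromBlocks _ _ _ _).map _ = _
    rw [Matrix.fromBlocks_map]
    have hC : (σ • LhatB F u n).map (fun q => Polynomial.eval lam0 q)
        = σ • ((LhatB F u n).map fun q => Polynomial.eval lam0 q) := by
      ext p q; simp [Polynomial.eval_smul]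
    have hD : ((0 : Matrix (Fin u × Fin n) (Fin u × Fin n) (Polynomial F)).map
        fun q => Polynomial.eval lam0 q) = 0 := by
      ext p q; simp
    rw [hC, hD]
    rfl
  rw [hfb] at hLz
  have hzel : z = Sum.elim w yv := by funext q; cases q <;> rfl
  rw [hzel, Matrix.fromBlocks_mulVec] at hLz
  have E1 : (evalMat lam0 (pencil A B)) *ᵥ w + (evalMat lam0 ((LhatB F u n)ᵀ)) *ᵥ yv = 0 := by
    funext q; simpa using congrFun hLz (Sum.inl q)
  have E2 : (evalMat lam0 (LhatB F u n)) *ᵥ w = 0 := by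
    have h : σ • ((evalMat lam0 (LhatB F u n)) *ᵥ w) = 0 := by
      funext p
      have h0 := congrFun hLz (Sum.inr p)
      simpa [Matrix.smul_mulVec] using h0
    funext p
    have := congrFun h p
    simp only [Pi.smul_apply, smul_eq_mul, Pi.zero_apply, mul_eq_zero] at this
    exact this.resolve_left hs0
  -- step relation on the middle blocks
  have hstep : ∀ (i : Fin u) (r : Fin n),
      w (Sum.inr (i.castSucc, r)) = lam0 * w (Sum.inr (i.succ, r)) := by
    intro i r
    have h := congrFun E2 (i, r)
    simp only [Matrix.mulVec, dotProduct, evalMat, Matrix.map_apply, LhatB,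
      Matrix.of_apply, Fintype.sum_sum_type, Matrix.kroneckerMap_apply, Pi.zero_apply,
      Polynomial.eval_zero, zero_mul, Finset.sum_const_zero, zero_add,
      Fintype.sum_prod_type, Matrix.one_apply, mul_ite, mul_one, mul_zero,
      Polynomial.eval_mul, apply_ite (Polynomial.eval lam0), Polynomial.eval_one,
      ite_mul, zero_mul, Finset.sum_ite_eq, Finset.mem_univ, if_true] at h
    rw [colsum_eval lam0 i (fun j => w (Sum.inr (j, r)))] at h
    linear_combination -h
  have hfact1 : ∀ (i : Fin (u+1)) (r : Fin n),
      w (Sum.inr (i, r)) = lam0 ^ (u - (i : ℕ)) * x r := by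
    intro i
    induction i using Fin.reverseInduction with
    | last =>
      intro r
      simp [Fin.val_last, Nat.sub_self, hxdef, hwdef]
    | cast i ih =>
      intro r
      rw [hstep i r, ih r]
      have hc : u - ((i.castSucc : Fin (u+1)) : ℕ) = (u - ((i.succ : Fin (u+1)) : ℕ)) + 1 := by
        simp only [Fin.coe_castSucc, Fin.val_succ]
        omega
      rw [hc, pow_succ']
      ring
  -- the Lambda vector relation
  set Le : Matrix (Fin (u+1) × Fin n) (Fin n) F := evalMat lam0 (Lam F u n) with hLedef
  set w0 : Fin n → F := fun r => w (Sum.inl r) with hw0def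
  set w1 : Fin (u+1) × Fin n → F := fun p => w (Sum.inr p) with hw1def
  have hLamx : Le *ᵥ x = w1 := by
    funext p
    obtain ⟨i, r⟩ := p
    simp only [hLedef, Matrix.mulVec, dotProduct, evalMat, Matrix.map_apply, Lam,
      Matrix.of_apply, apply_ite (Polynomial.eval lam0), Polynomial.eval_pow,
      Polynomial.eval_X, Polynomial.eval_zero, ite_mul, zero_mul, Finset.sum_ite_eq,
      Finset.mem_univ, if_true]
    rw [hw1def]
    exact (hfact1 i r).symm
  -- block decomposition of the pencil action
  set M11 : Matrix (Fin n) (Fin n) F := evalMat lam0 (pencil A B).toBlocks₁₁ with hM11def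
  set M12 := evalMat lam0 (pencil A B).toBlocks₁₂ with hM12def
  set M21 := evalMat lam0 (pencil A B).toBlocks₂₁ with hM21def
  set M22 := evalMat lam0 (pencil A B).toBlocks₂₂ with hM22def
  have hMev : evalMat lam0 (pencil A B) *ᵥ w
      = Sum.elim (M11 *ᵥ w0 + M12 *ᵥ w1) (M21 *ᵥ w0 + M22 *ᵥ w1) := by
    conv_lhs => rw [← Matrix.fromBlocks_toBlocks (evalMat lam0 (pencil A B))]
    rw [Matrix.fromBlocks_mulVec]
    rfl
  have hLtop : ∀ r, ((evalMat lam0 ((LhatB F u n)ᵀ)) *ᵥ yv) (Sum.inl r) = 0 := by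
    intro r
    simp [Matrix.mulVec, dotProduct, evalMat, LhatB, Matrix.transpose_apply]
  have E1top : M11 *ᵥ w0 + M12 *ᵥ w1 = 0 := by
    funext r
    have h := congrFun E1 (Sum.inl r)
    rw [Pi.add_apply, hMev] at h
    simpa [hLtop r] using h
  have hLbot : (fun p => ((evalMat lam0 ((LhatB F u n)ᵀ)) *ᵥ yv) (Sum.inr p))
      = (evalMat lam0 ((Lpen F u ⊗ₖ (1 : Matrix (Fin n) (Fin n) (Polynomial F)))ᵀ)) *ᵥ yv := by
    funext p
    simp [Matrix.mulVec, dotProduct, evalMat, LhatB, Matrix.transpose_apply]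
  have E1bot : M21 *ᵥ w0 + M22 *ᵥ w1
      + (evalMat lam0 ((Lpen F u ⊗ₖ (1 : Matrix (Fin n) (Fin n) (Polynomial F)))ᵀ)) *ᵥ yv = 0 := by
    funext p
    have h := congrFun E1 (Sum.inr p)
    rw [Pi.add_apply, hMev] at h
    have h2 := congrFun hLbot p
    simp only [Sum.elim_inr] at h
    rw [h2] at h
    simpa using h
  -- M11 = -Pd
  have hM11 : M11 = -Pd := by
    rw [hM11def, h11, evalMat_neg]
    ext i j; simp [evalMat, matC]
  -- M12 * Le = lam0^(u+1) • Pd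
  have hM12L : M12 * Le = lam0 ^ (u+1) • Pd := by
    rw [hM12def, hLedef, ← evalMat_mul, h12, evalMat_XsmulC]
  have hPdw0 : Pd *ᵥ w0 = lam0 ^ (u+1) • (Pd *ᵥ x) := by
    have h := E1top
    rw [hM11, Matrix.neg_mulVec, ← hLamx, Matrix.mulVec_mulVec, hM12L,
      Matrix.smul_mulVec] at h
    exact neg_add_eq_zero.mp h
  have hinj : ∀ v v' : Fin n → F, Pd *ᵥ v = Pd *ᵥ v' → v = v' := by
    intro v v' h
    have h2 := congrArg (fun t => Pd⁻¹ *ᵥ t) h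
    simpa [Matrix.mulVec_mulVec, Matrix.nonsing_inv_mul Pd hPd, Matrix.one_mulVec] using h2
  have hw0x : w0 = lam0 ^ (u+1) • x := by
    apply hinj
    rw [hPdw0, Matrix.mulVec_smul]
  -- left-multiply the bottom equation by Leᵀ
  have hLeT_mul : Leᵀ *ᵥ ((evalMat lam0 ((Lpen F u ⊗ₖ (1 : Matrix (Fin n) (Fin n) (Polynomial F)))ᵀ)) *ᵥ yv) = 0 := by
    rw [Matrix.mulVec_mulVec, hLedef, ← evalMat_transpose, ← evalMat_mul,
      ← Matrix.transpose_mul, kron_mul_lam, Matrix.transpose_zero, evalMat_zero,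
      Matrix.zero_mulVec]
  have hM21L : Leᵀ * M21 = lam0 ^ (u+1) • Pd := by
    rw [hM21def, hLedef, ← evalMat_transpose, ← evalMat_mul, h21, evalMat_XsmulC]
  have hM22L : Leᵀ * M22 * Le
      = evalMat lam0 (∑ k ∈ Finset.range (2*(u+1)), (X : Polynomial F) ^ k • matC (Pc k)) := by
    rw [hM22def, hLedef, ← evalMat_transpose, ← evalMat_mul, ← evalMat_mul, h22]
  have hmain : lam0 ^ (u+1) • (Pd *ᵥ w0)
      + (evalMat lam0 (∑ k ∈ Finset.range (2*(u+1)), (X : Polynomial F) ^ k • matC (Pc k))) *ᵥ x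
      = 0 := by
    have h := congrArg (fun v => Leᵀ *ᵥ v) E1bot
    simp only [Matrix.mulVec_add, Matrix.mulVec_zero] at h
    rw [hLeT_mul] at h
    rw [Matrix.mulVec_mulVec w0 Leᵀ M21, hM21L] at h
    rw [← hLamx] at h
    rw [Matrix.mulVec_mulVec (Le *ᵥ x) Leᵀ M22, Matrix.mulVec_mulVec x (Leᵀ * M22) Le,
      hM22L] at h
    rw [Matrix.smul_mulVec] at h
    simpa using h
  have hsplit : evalMat lam0 (polyOfCoeffs (2*(u+1)) Pc)
      = evalMat lam0 (∑ k ∈ Finset.range (2*(u+1)), (X : Polynomial F) ^ k • matC (Pc k))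
        + lam0 ^ (2*(u+1)) • Pd := by
    rw [polyOfCoeffs, Finset.sum_range_succ, evalMat_add, evalMat_XsmulC]
  have hgoal2 : (evalMat lam0 (polyOfCoeffs (2*(u+1)) Pc)) *ᵥ x = 0 := by
    rw [hsplit, Matrix.add_mulVec, Matrix.smul_mulVec]
    have hp : lam0 ^ (2*(u+1)) • (Pd *ᵥ x) = lam0 ^ (u+1) • (Pd *ᵥ w0) := by
      rw [hPdw0, smul_smul, ← pow_add, two_mul]
    rw [hp]
    linear_combination (norm := module) hmain
  refine ⟨?_, hgoal2⟩
  intro hx0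
  apply hz
  have hw1z : w1 = 0 := by
    funext p
    obtain ⟨i, r⟩ := p
    rw [hw1def]
    simp only []
    rw [hfact1 i r]
    rw [hx0]
    simp
  have hw0z : w0 = 0 := by
    rw [hw0x, hx0]
    simp
  have hKy : (evalMat lam0 ((Lpen F u ⊗ₖ (1 : Matrix (Fin n) (Fin n) (Polynomial F)))ᵀ)) *ᵥ yv = 0 := by
    have h := E1bot
    rw [hw0z, hw1z, Matrix.mulVec_zero, Matrix.mulVec_zero] at h
    simpa using h
  have hyrow : ∀ (i : Fin (u+1)) (r : Fin n),
      ∑ j : Fin u, (Lpen F u j i).eval lam0 * yv (j, r) = 0 := by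
    intro i r
    have h := congrFun hKy (i, r)
    simp only [Matrix.mulVec, dotProduct, evalMat, Matrix.map_apply,
      Matrix.transpose_apply, Matrix.kroneckerMap_apply, Fintype.sum_prod_type,
      Matrix.one_apply, Polynomial.eval_mul, apply_ite (Polynomial.eval lam0),
      Polynomial.eval_one, Polynomial.eval_zero, mul_ite, mul_one, mul_zero, ite_mul,
      zero_mul, Finset.sum_ite_eq', Finset.mem_univ, if_true, Pi.zero_apply] at h
    exact h
  have hyz : ∀ (m : ℕ) (j : Fin u) (r : Fin n), (j : ℕ) = m → yv (j, r) = 0 := by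
    intro m
    induction m using Nat.strong_induction_on with
    | _ m ih =>
      intro j r hj
      have h := hyrow j.castSucc r
      rw [Finset.sum_eq_single_of_mem j (Finset.mem_univ j)] at h
      · have hval : Lpen F u j j.castSucc = -1 := by
          simp [Lpen, Fin.coe_castSucc]
        rw [hval] at h
        simpa using h
      · intro b _ hb
        have hval : Lpen F u b j.castSucc = if (j : ℕ) = (b : ℕ) + 1 then X else 0 := by
          simp only [Lpen, Matrix.of_apply, Fin.coe_castSucc]
          have : ¬ ((j : ℕ) = (b : ℕ)) := fun hc => hb (Fin.ext hc.symm)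
          rw [if_neg this]
        rw [hval]
        by_cases hc : (j : ℕ) = (b : ℕ) + 1
        · rw [if_pos hc]
          have hb0 : yv (b, r) = 0 := ih (b : ℕ) (by omega) b r rfl
          simp [hb0]
        · rw [if_neg hc]; simp
  rw [hzel]
  funext q
  rcases q with q | p
  · rcases q with r | p
    · simpa using congrFun hw0z r
    · simpa using congrFun hw1z p
  · obtain ⟨j, r⟩ := p
    simpa using hyz (j : ℕ) j r rfl
end
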